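/- Let r ≥ 2 and m ≥ 1 be integers, and let H be a spanning r-uniform multi-hypergraph with hyperedges R_1, …, R_m on vertex set V such that every R_i meets the union of the other hyperedges in at least 2 vertices. If |V| = (r−1)·m, then every hyperedge contains exactly 2 vertices of degree 2 and r−2 vertices of degree 1, and no vertex has degree ≥ 3. -/

import Mathlib

/-!
Count incidences. Every vertex has degree at least `1`, so `∑ (deg v - 1) = rm - |V| = m`,
i.e. the vertices `S` of degree at least `2` satisfy `∑_{v ∈ S} deg v = |S| + m`.
Each hyperedge meets the others in at least two vertices, all of which lie in `S`, so
`∑_{v ∈ S} deg v = ∑_i |R_i ∩ S| ≥ 2m`; trivially also `∑_{v ∈ S} deg v ≥ 2|S|`.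
Together these force `|S| = m` and equality in both bounds: every vertex of `S` has degree
exactly `2` and every hyperedge contains exactly two of them.
-/

open Finset

namespace MultiHypergraph

variable {α ι : Type*} [Fintype ι] [DecidableEq α]

def degree (R : ι → Finset α) (v : α) : ℕ := #{i | v ∈ R i}

variable {R : ι → Finset α}

theorem sum_degree_eq_sum_card_inter (R : ι → Finset α) (T : Finset α) :
    ∑ v ∈ T, degree R v = ∑ i, #(T ∩ R i) := by
  have := sum_card_bipartiteAbove_eq_sum_card_bipartiteBelow (s := univ) (t := T)
    (r := fun i v => v ∈ R i)
  simp only [bipartiteAbove, bipartiteBelow, filter_mem_eq_inter] at this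
  exact this.symm

theorem sum_degree_eq_sum_card [Fintype α] (R : ι → Finset α) :
    ∑ v, degree R v = ∑ i, #(R i) := by
  simp only [sum_degree_eq_sum_card_inter, univ_inter]

theorem one_le_degree (hspan : ∀ v, ∃ i, v ∈ R i) (v : α) : 1 ≤ degree R v :=
  let ⟨i, hi⟩ := hspan v
  card_pos.2 ⟨i, mem_filter.2 ⟨mem_univ i, hi⟩⟩

theorem two_le_degree_of_mem_inter_biUnion [DecidableEq ι] {i : ι} {v : α}
    (hv : v ∈ R i ∩ (univ.erase i).biUnion R) : 2 ≤ degree R v := by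
  obtain ⟨hvi, j, hj, hvj⟩ := by simpa only [mem_inter, mem_biUnion] using hv
  exact one_lt_card.2 ⟨i, by simpa using hvi, j, by simpa using hvj, (ne_of_mem_erase hj).symm⟩

theorem sum_degree_filter_two_le_add_card [Fintype α] (hspan : ∀ v, ∃ i, v ∈ R i) :
    ∑ v ∈ {v | 2 ≤ degree R v}, degree R v + Fintype.card α =
      #{v | 2 ≤ degree R v} + ∑ i, #(R i) := by
  set S : Finset α := {v | 2 ≤ degree R v}
  have hcompl : ∑ v ∈ Sᶜ, degree R v = #Sᶜ := by
    rw [card_eq_sum_ones]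
    refine sum_congr rfl fun v hv => ?_
    have := one_le_degree hspan v
    simp only [S, mem_compl, mem_filter, mem_univ, true_and] at hv
    omega
  rw [← card_add_card_compl S, ← sum_degree_eq_sum_card, ← sum_add_sum_compl S, hcompl]
  ring

theorem degree_le_two_and_card_filter_degree_eq_two [Fintype α] [DecidableEq ι]
    (hspan : ∀ v, ∃ i, v ∈ R i)
    (hmeet : ∀ i, 2 ≤ #(R i ∩ (univ.erase i).biUnion R))
    (hcount : Fintype.card α + Fintype.card ι = ∑ i, #(R i)) :
    (∀ v, degree R v ≤ 2) ∧ ∀ i, #{v ∈ R i | degree R v = 2} = 2 := by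
  have hexcess := sum_degree_filter_two_le_add_card hspan
  set S : Finset α := {v | 2 ≤ degree R v}
  have hedge : ∀ i, 2 ≤ #(S ∩ R i) := fun i =>
    (hmeet i).trans <| card_le_card fun v hv => by
      simp [S, (mem_inter.1 hv).1, two_le_degree_of_mem_inter_biUnion hv]
  have hlow : Fintype.card ι * 2 ≤ ∑ v ∈ S, degree R v := by
    rw [sum_degree_eq_sum_card_inter, ← smul_eq_mul]
    exact card_nsmul_le_sum _ _ _ fun i _ => hedge i
  have hhigh : #S * 2 ≤ ∑ v ∈ S, degree R v := by
    rw [← smul_eq_mul]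
    exact card_nsmul_le_sum _ _ _ fun v hv => (mem_filter.1 hv).2
  have hdegS : ∑ _v ∈ S, 2 = ∑ v ∈ S, degree R v := by simp only [sum_const, smul_eq_mul]; omega
  have hcardS : ∑ _i : ι, 2 = ∑ i, #(S ∩ R i) := by
    simp only [← sum_degree_eq_sum_card_inter, sum_const, card_univ, smul_eq_mul]; omega
  rw [sum_eq_sum_iff_of_le fun v hv => (mem_filter.1 hv).2] at hdegS
  rw [sum_eq_sum_iff_of_le fun i _ => hedge i] at hcardS
  have hle : ∀ v, degree R v ≤ 2 := fun v => by
    by_contra! h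
    have := hdegS v (by simp; omega)
    omega
  refine ⟨hle, fun i => ?_⟩
  have hfilter : {v ∈ R i | degree R v = 2} = S ∩ R i := by
    ext v
    have := hle v
    simp only [S, mem_filter, mem_inter, mem_univ, true_and, and_comm (a := v ∈ R i)]
    exact and_congr_left fun _ => by omega
  rw [hfilter, ← hcardS i (mem_univ i)]

end MultiHypergraph

open MultiHypergraph

theorem clique_hypergraph_equality_case_general {α : Type*} [Fintype α] [DecidableEq α]
    (r m : ℕ) (hr : 2 ≤ r) (R : Fin m → Finset α)
    (hcard : ∀ i, (R i).card = r)
    (hspan : ∀ v : α, ∃ i, v ∈ R i)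
    (hmeet : ∀ i, 2 ≤ (R i ∩ (Finset.univ.erase i).biUnion R).card)
    (hv : Fintype.card α = (r - 1) * m)
    (deg : α → ℕ) (hdeg : ∀ v, deg v = (Finset.univ.filter fun i => v ∈ R i).card) :
    (∀ i, ((R i).filter fun v => deg v = 2).card = 2 ∧
          ((R i).filter fun v => deg v = 1).card = r - 2) ∧
    (∀ v, deg v ≤ 2) := by
  obtain rfl : deg = degree R := funext hdeg
  have hcount : Fintype.card α + Fintype.card (Fin m) = ∑ i, #(R i) := by
    rw [hv, Fintype.card_fin, ← add_one_mul, Nat.sub_add_cancel (by omega)]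
    simp [hcard, mul_comm]
  obtain ⟨hle, htwo⟩ := degree_le_two_and_card_filter_degree_eq_two hspan hmeet hcount
  refine ⟨fun i => ⟨htwo i, ?_⟩, hle⟩
  have hone : {v ∈ R i | degree R v = 1} = {v ∈ R i | ¬degree R v = 2} :=
    filter_congr fun v _ => by have := one_le_degree hspan v; have := hle v; omega
  have hsplit := card_filter_add_card_filter_not (s := R i) (fun v => degree R v = 2)
  rw [hone, ← hcard i, ← hsplit, htwo i, Nat.add_sub_cancel_left]

/-- In a spanning `r`-uniform multi-hypergraph with hyperedges
`R 1, …, R m` on vertex set `α` in which every hyperedge meets the union of the others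
in at least 2 vertices, if the number of vertices equals `(r-1)·m`, then every hyperedge
contains exactly `2` vertices of degree `2` and `r-2` vertices of degree `1`, and no
vertex has degree `≥ 3`.  Here the degree of `v` is the number of indices `i` with
`v ∈ R i`. -/
theorem clique_hypergraph_equality_case {α : Type*} [Fintype α] [DecidableEq α]
    (r m : ℕ) (hr : 2 ≤ r) (hm : 1 ≤ m) (R : Fin m → Finset α)
    (hcard : ∀ i, (R i).card = r)
    (hspan : ∀ v : α, ∃ i, v ∈ R i)
    (hmeet : ∀ i, 2 ≤ (R i ∩ (Finset.univ.erase i).biUnion R).card)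
    (hv : Fintype.card α = (r - 1) * m)
    (deg : α → ℕ) (hdeg : ∀ v, deg v = (Finset.univ.filter fun i => v ∈ R i).card) :
    (∀ i, ((R i).filter fun v => deg v = 2).card = 2 ∧
          ((R i).filter fun v => deg v = 1).card = r - 2) ∧
    (∀ v, deg v ≤ 2) :=
  clique_hypergraph_equality_case_general r m hr R hcard hspan hmeet hv deg hdeg
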